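/- For all r, s ∈ ℤ^M, the commutator of derivations satisfies [D(r̲, r), D(s̲, s)] = ⟨r̲, s⟩ · D((r+s)̲, r+s), where (r+s)̲ = r̲ + s̲. -/

import Mathlib

/-- The "underline" map on `ℤ^{2m+1}`:
`ul r = (r_{m+1}+r_M, …, r_{2m}+r_M, −r_1+r_M, …, −r_m+r_M, −Σ_{i=1}^{2m} r_i)`. -/
def ul (m : ℕ) (r : Fin (2*m+1) → ℤ) : Fin (2*m+1) → ℤ := fun i =>
  if h : (i : ℕ) < m then r ⟨(i : ℕ) + m, by omega⟩ + r ⟨2*m, by omega⟩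
  else if h2 : (i : ℕ) < 2*m then - r ⟨(i : ℕ) - m, by omega⟩ + r ⟨2*m, by omega⟩
  else - ∑ j : Fin (2*m), r ⟨(j : ℕ), by have := j.isLt; omega⟩

/-- The Laurent polynomial algebra `A = ℂ[t₁^{±1}, …, t_M^{±1}]`, realized as the
group algebra of `ℤ^M` over `ℂ`; the monomial `t^r` is `AddMonoidAlgebra.single r 1`. -/
noncomputable abbrev LaurentA (M : ℕ) := AddMonoidAlgebra ℂ (Fin M → ℤ)

/-- `IsD M u r D` says that `D` is the derivation `D(u,r)` of `A`, i.e. the (unique)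
`ℂ`-linear derivation with `D(t^s) = ⟨u,s⟩ · t^{r+s}` for all `s ∈ ℤ^M`. -/
def IsD (M : ℕ) (u : Fin M → ℂ) (r : Fin M → ℤ)
    (D : Derivation ℂ (LaurentA M) (LaurentA M)) : Prop :=
  ∀ s : Fin M → ℤ,
    D (AddMonoidAlgebra.single s (1 : ℂ)) =
      (∑ i, u i * (s i : ℂ)) • AddMonoidAlgebra.single (r + s) (1 : ℂ)

/-! On monomials, `[D(u,r), D(v,s)] t^p = (⟨v,p⟩⟨u,s+p⟩ − ⟨u,p⟩⟨v,r+p⟩) t^{r+s+p}`, and the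
terms quadratic in `p` cancel, so `[D(u,r), D(v,s)] = D(⟨u,s⟩ v − ⟨v,r⟩ u, r + s)`; a derivation
of `A` is determined by its values on monomials. The form `(r, s) ↦ ⟨r̲, s⟩` is alternating: in
`⟨r̲, r⟩` the products `r_i r_{i+m}` occur with both signs and the multiples of `r_M` cancel. Hence
`⟨s̲, r⟩ = −⟨r̲, s⟩`, and the vector above becomes `⟨r̲, s⟩ (r̲ + s̲) = ⟨r̲, s⟩ (r+s)̲`. -/

open AddMonoidAlgebra Finset

section Derivations

variable {M : ℕ} {u v : Fin M → ℂ} {r s : Fin M → ℤ}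
  {D D' D₁ D₂ : Derivation ℂ (LaurentA M) (LaurentA M)}

lemma IsD.ext (h : IsD M u r D) (h' : IsD M u r D') : D = D' :=
  Derivation.ext fun a => LinearMap.congr_fun
    (lhom_ext' fun p => LinearMap.ext_ring <| by simpa using (h p).trans (h' p).symm) a

lemma IsD.smul (h : IsD M u r D) (c : ℂ) : IsD M (c • u) r (c • D) := fun p => by
  rw [Derivation.smul_apply, h p, smul_smul]
  simp only [Pi.smul_apply, smul_eq_mul, mul_sum, mul_assoc]

lemma IsD.lie (h₁ : IsD M u r D₁) (h₂ : IsD M v s D₂) :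
    IsD M ((u ⬝ᵥ fun i => (s i : ℂ)) • v - (v ⬝ᵥ fun i => (r i : ℂ)) • u) (r + s) ⁅D₁, D₂⁆ := by
  intro p
  rw [Derivation.commutator_apply, h₂ p, h₁ p, D₁.map_smul, D₂.map_smul, h₁, h₂, ← add_assoc,
    ← add_assoc, add_comm s r, smul_smul, smul_smul, ← sub_smul]
  congr 1
  simp only [dotProduct, Pi.add_apply, Int.cast_add, mul_add, sum_add_distrib, Pi.sub_apply,
    Pi.smul_apply, smul_eq_mul, sub_mul, sum_sub_distrib, mul_assoc, ← mul_sum]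
  ring

end Derivations

lemma ul_add (m : ℕ) (r s : Fin (2*m+1) → ℤ) : ul m (r + s) = ul m r + ul m s := by
  funext i
  simp only [ul, Pi.add_apply]
  split_ifs
  · ring
  · ring
  · rw [← neg_add, ← sum_add_distrib]

lemma ul_dotProduct_self (m : ℕ) (r : Fin (2*m+1) → ℤ) : ul m r ⬝ᵥ r = 0 := by
  set f : ℕ → ℤ := Function.extend Fin.val r 0
  have hf : ∀ i (h : i < 2*m+1), r ⟨i, h⟩ = f i := fun i h =>
    (Fin.val_injective.extend_apply r 0 ⟨i, h⟩).symm
  have hsum : ul m r ⬝ᵥ r = ∑ i ∈ range (2*m+1),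
      (if i < m then f (m+i) + f (2*m) else if i < 2*m then -f (i-m) + f (2*m)
        else -∑ j ∈ range (m+m), f j) * f i := by
    rw [← Fin.sum_univ_eq_sum_range]
    refine sum_congr rfl fun i _ => ?_
    simp only [ul, hf, Fin.sum_univ_eq_sum_range (fun j => f j), ← two_mul, add_comm m]
    split_ifs <;> rfl
  rw [hsum, sum_range_succ, two_mul, sum_range_add, sum_range_add]
  simp +contextual (disch := grind) only [if_pos, if_neg, Nat.add_sub_cancel_left, lt_irrefl]
  simp only [add_mul, neg_mul, neg_add, sum_mul, ← sum_neg_distrib, ← sum_add_distrib]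
  exact sum_eq_zero fun i _ => by ring

lemma ul_dotProduct_swap (m : ℕ) (r s : Fin (2*m+1) → ℤ) : ul m s ⬝ᵥ r = -(ul m r ⬝ᵥ s) := by
  have := ul_dotProduct_self m (r + s)
  rw [ul_add, add_dotProduct, dotProduct_add, dotProduct_add, ul_dotProduct_self,
    ul_dotProduct_self] at this
  linarith

theorem stmt8_general (m : ℕ) (r s : Fin (2*m+1) → ℤ)
    (Dr Ds Drs : Derivation ℂ (LaurentA (2*m+1)) (LaurentA (2*m+1)))
    (hr : IsD (2*m+1) (fun i => (ul m r i : ℂ)) r Dr)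
    (hs : IsD (2*m+1) (fun i => (ul m s i : ℂ)) s Ds)
    (hrs : IsD (2*m+1) (fun i => (ul m (r + s) i : ℂ)) (r + s) Drs) :
    ul m (r + s) = ul m r + ul m s ∧
    ⁅Dr, Ds⁆ = ((∑ i, ul m r i * s i : ℤ) : ℂ) • Drs := by
  refine ⟨ul_add m r s, (hr.lie hs).ext ?_⟩
  convert hrs.smul ((∑ i, ul m r i * s i : ℤ) : ℂ) using 1
  funext i
  have swap := congrArg (Int.cast (R := ℂ)) (ul_dotProduct_swap m r s)
  push_cast [dotProduct] at swap
  simp only [dotProduct, swap, ul_add, Pi.sub_apply, Pi.smul_apply, Pi.add_apply, smul_eq_mul]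
  push_cast
  ring

/-- For all `r, s ∈ ℤ^{2m+1}`: `[D(r̲,r), D(s̲,s)] = ⟨r̲,s⟩ · D((r+s)̲, r+s)`,
where `(r+s)̲ = r̲ + s̲`. -/
theorem stmt8 (m : ℕ) (hm : 1 ≤ m) (r s : Fin (2*m+1) → ℤ)
    (Dr Ds Drs : Derivation ℂ (LaurentA (2*m+1)) (LaurentA (2*m+1)))
    (hr : IsD (2*m+1) (fun i => (ul m r i : ℂ)) r Dr)
    (hs : IsD (2*m+1) (fun i => (ul m s i : ℂ)) s Ds)
    (hrs : IsD (2*m+1) (fun i => (ul m (r + s) i : ℂ)) (r + s) Drs) :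
    ul m (r + s) = ul m r + ul m s ∧
    ⁅Dr, Ds⁆ = ((∑ i, ul m r i * s i : ℤ) : ℂ) • Drs :=
  stmt8_general m r s Dr Ds Drs hr hs hrs
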